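/- Let R ⊆ [2] × P with parts R_1, R_2. If it is not the case that R_1 ≤ R_2, then the restriction Δ(2,P)|_R is contractible, so all its reduced cohomology vanishes; consequently β_{i,R}(L(2,P)) can be nonzero only if R_1 ≤ R_2. -/

import Mathlib

/-!
Common infrastructure: abstract simplicial complexes, geometric realization,
homotopy equivalence, reduced simplicial cohomology, squarefree monomial ideals
(encoded as upward closed families of finite sets), Koszul-complex multigraded
Betti numbers, and letterplace ideals of posets.
-/

noncomputable section

open Finset

attribute [local instance] Classical.propDecidable

universe u v w

/-- An abstract simplicial complex on the vertex type `V`: a collection of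
finite subsets of `V` (the faces) closed under taking subsets. -/
structure SComplex (V : Type u) where
  faces : Set (Finset V)
  down_closed : ∀ {F G : Finset V}, F ∈ faces → G ⊆ F → G ∈ faces

namespace SComplex

/-- The geometric realization of a simplicial complex: the subspace of `V → ℝ`
consisting of the convex weight functions supported on a face. -/
def realization {V : Type u} [Fintype V] (X : SComplex V) : Set (V → ℝ) :=
  {f | (∀ v, 0 ≤ f v) ∧ (∑ v, f v) = 1 ∧ ∃ F ∈ X.faces, ∀ v, f v ≠ 0 → v ∈ F}

/-- Two simplicial complexes are homotopy equivalent if their geometric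
realizations are homotopy equivalent topological spaces. -/
def HEquiv {V : Type u} {W : Type v} [Fintype V] [Fintype W]
    (X : SComplex V) (Y : SComplex W) : Prop :=
  Nonempty (ContinuousMap.HomotopyEquiv X.realization Y.realization)

/-- Isomorphism ("equality up to relabeling of vertices") of simplicial
complexes: an order isomorphism between the face posets. -/
def IsIsomorphic {V : Type u} {W : Type v} (X : SComplex V) (Y : SComplex W) : Prop :=
  Nonempty ({F : Finset V // F ∈ X.faces} ≃o {G : Finset W // G ∈ Y.faces})

/-- The induced subcomplex on a subset `S` of the vertex set. -/
def restrict {V : Type u} (X : SComplex V) (S : Set V) : SComplex V where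
  faces := {F | F ∈ X.faces ∧ ∀ v ∈ F, v ∈ S}
  down_closed := by
    intro F G hF hGF
    exact ⟨X.down_closed hF.1 hGF, fun v hv => hF.2 v (hGF hv)⟩

/-- The join of two simplicial complexes (on the disjoint union of the two
vertex types). -/
def join {V : Type u} {W : Type v} (X : SComplex V) (Y : SComplex W) :
    SComplex (V ⊕ W) where
  faces := {F | F.preimage Sum.inl Sum.inl_injective.injOn ∈ X.faces ∧
                F.preimage Sum.inr Sum.inr_injective.injOn ∈ Y.faces}
  down_closed := by
    intro F G hF hGF
    constructor
    · exact X.down_closed hF.1 fun x hx => by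
        simp only [Finset.mem_preimage] at hx ⊢
        exact hGF hx
    · exact Y.down_closed hF.2 fun x hx => by
        simp only [Finset.mem_preimage] at hx ⊢
        exact hGF hx

/-- The join of a finite family of simplicial complexes on pairwise disjoint
vertex types. -/
def bigJoin {ι : Type u} {V : ι → Type v} (X : ∀ i, SComplex (V i)) :
    SComplex (Σ i, V i) where
  faces := {F | ∀ i, F.preimage (Sigma.mk i) sigma_mk_injective.injOn ∈ (X i).faces}
  down_closed := by
    intro F G hF hGF i
    exact (X i).down_closed (hF i) fun x hx => by
      simp only [Finset.mem_preimage] at hx ⊢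
      exact hGF hx

/-- The simplicial complex consisting of two disjoint points. -/
def twoPoint : SComplex Bool where
  faces := {F | F.card ≤ 1}
  down_closed := by
    intro F G hF hGF
    exact le_trans (Finset.card_le_card hGF) hF

/-- The suspension of a simplicial complex: its join with two points. -/
def suspension {V : Type u} (X : SComplex V) : SComplex (V ⊕ Bool) :=
  join X twoPoint

/-- Vertex type of the `m`-fold iterated suspension. -/
def SuspType (V : Type u) : ℕ → Type u
  | 0 => V
  | m + 1 => SuspType V m ⊕ Bool

/-- The `m`-fold iterated suspension of a simplicial complex. -/
def iterSusp {V : Type u} (X : SComplex V) : (m : ℕ) → SComplex (SuspType V m)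
  | 0 => X
  | m + 1 => suspension (iterSusp X m)

end SComplex

/-- Position of `x` with respect to a finite set: the number of elements of `F`
preceding `x` in a fixed well-ordering of the vertex type.  Used for the signs
in (co)chain complexes. -/
def vpos {V : Type u} (F : Finset V) (x : V) : ℕ :=
  (F.filter fun w => WellOrderingRel w x).card

namespace SComplex

variable (k : Type w) [Field k]

/-- The faces of dimension `i` (i.e. of cardinality `i + 1`), `i ∈ ℤ`. -/
abbrev Face {V : Type u} (X : SComplex V) (i : ℤ) : Type u :=
  {F : Finset V // F ∈ X.faces ∧ (F.card : ℤ) = i + 1}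

/-- Reduced simplicial `i`-cochains of `X` with coefficients in `k`
(the empty face in dimension `-1` is included). -/
abbrev cochain {V : Type u} (X : SComplex V) (i : ℤ) : Type (max u w) :=
  Face X i → k

/-- Evaluation of a cochain on an arbitrary finite set (zero if the set is not
a face of the appropriate dimension). -/
def evalC {V : Type u} {X : SComplex V} {i : ℤ} (f : cochain k X i) (F : Finset V) : k :=
  if h : F ∈ X.faces ∧ (F.card : ℤ) = i + 1 then f ⟨F, h⟩ else 0

theorem evalC_add {V : Type u} {X : SComplex V} {i : ℤ} (f g : cochain k X i)
    (F : Finset V) : evalC k (f + g) F = evalC k f F + evalC k g F := by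
  unfold evalC
  split_ifs <;> simp

theorem evalC_smul {V : Type u} {X : SComplex V} {i : ℤ} (s : k) (f : cochain k X i)
    (F : Finset V) : evalC k (s • f) F = s * evalC k f F := by
  unfold evalC
  split_ifs <;> simp

/-- The simplicial coboundary map on reduced cochains. -/
def coboundary {V : Type u} (X : SComplex V) (i : ℤ) :
    cochain k X i →ₗ[k] cochain k X (i + 1) where
  toFun f F := ∑ v ∈ F.1, ((-1 : k) ^ vpos F.1 v) * evalC k f (F.1.erase v)
  map_add' f g := by
    funext F
    show (∑ v ∈ F.1, ((-1 : k) ^ vpos F.1 v) * evalC k (f + g) (F.1.erase v))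
      = (∑ v ∈ F.1, ((-1 : k) ^ vpos F.1 v) * evalC k f (F.1.erase v))
      + (∑ v ∈ F.1, ((-1 : k) ^ vpos F.1 v) * evalC k g (F.1.erase v))
    rw [← Finset.sum_add_distrib]
    exact Finset.sum_congr rfl fun v _ => by rw [evalC_add, mul_add]
  map_smul' s f := by
    funext F
    show (∑ v ∈ F.1, ((-1 : k) ^ vpos F.1 v) * evalC k (s • f) (F.1.erase v))
      = s * ∑ v ∈ F.1, ((-1 : k) ^ vpos F.1 v) * evalC k f (F.1.erase v)
    rw [Finset.mul_sum]
    exact Finset.sum_congr rfl fun v _ => by rw [evalC_smul]; ring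

/-- The dimension of the `i`-th reduced simplicial cohomology of `X` with
coefficients in the field `k` (computed as `dim ker d^i - dim im d^(i-1)`). -/
def redCohomDim {V : Type u} (X : SComplex V) (i : ℤ) : ℕ :=
  Module.finrank k (LinearMap.ker (coboundary k X i)) -
    Module.finrank k (LinearMap.range (coboundary k X (i - 1)))

/-- The generating series `t·H̃(X,t) = ∑_{i ≥ -1} t^{i+1} dim_k H̃^i(X;k)`,
an element of `ℕ⟦t⟧`. -/
def hSeries {V : Type u} (X : SComplex V) : PowerSeries ℕ :=
  PowerSeries.mk fun m => redCohomDim k X ((m : ℤ) - 1)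

end SComplex

/-- A squarefree monomial ideal on the set of variables `W`, encoded by the
upward closed family of the supports of the squarefree monomials belonging
to it. -/
structure SqfIdeal (W : Type u) where
  carrier : Set (Finset W)
  up_closed : ∀ {S T : Finset W}, S ∈ carrier → S ⊆ T → T ∈ carrier

namespace SqfIdeal

/-- The basis of the degree-`R` strand of the Koszul complex `K(x;I)` in
homological degree `i`. -/
abbrev KBasis {W : Type u} (I : SqfIdeal W) (R : Finset W) (i : ℤ) : Type u :=
  {S : Finset W // S ⊆ R ∧ (S.card : ℤ) = i ∧ R \ S ∈ I.carrier}

/-- The degree-`R` strand of the Koszul complex of `I`, in homological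
degree `i`, with coefficients in `k`. -/
abbrev kchain (k : Type w) [Field k] {W : Type u} (I : SqfIdeal W) (R : Finset W)
    (i : ℤ) : Type (max u w) :=
  KBasis I R i → k

variable (k : Type w) [Field k]

/-- Evaluation of a Koszul chain on an arbitrary finite set. -/
def evalK {W : Type u} {I : SqfIdeal W} {R : Finset W} {i : ℤ}
    (f : kchain k I R i) (S : Finset W) : k :=
  if h : S ⊆ R ∧ (S.card : ℤ) = i ∧ R \ S ∈ I.carrier then f ⟨S, h⟩ else 0

theorem evalK_add {W : Type u} {I : SqfIdeal W} {R : Finset W} {i : ℤ}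
    (f g : kchain k I R i) (S : Finset W) :
    evalK k (f + g) S = evalK k f S + evalK k g S := by
  unfold evalK
  split_ifs <;> simp

theorem evalK_smul {W : Type u} {I : SqfIdeal W} {R : Finset W} {i : ℤ}
    (s : k) (f : kchain k I R i) (S : Finset W) :
    evalK k (s • f) S = s * evalK k f S := by
  unfold evalK
  split_ifs <;> simp

/-- The Koszul differential on the degree-`R` strand (as a map of the dual
function spaces). -/
def koszulD {W : Type u} (I : SqfIdeal W) (R : Finset W) (i : ℤ) :
    kchain k I R i →ₗ[k] kchain k I R (i - 1) where
  toFun f S := ∑ v ∈ R \ S.1, ((-1 : k) ^ vpos S.1 v) * evalK k f (insert v S.1)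
  map_add' f g := by
    funext S
    show (∑ v ∈ R \ S.1, ((-1 : k) ^ vpos S.1 v) * evalK k (f + g) (insert v S.1))
      = (∑ v ∈ R \ S.1, ((-1 : k) ^ vpos S.1 v) * evalK k f (insert v S.1))
      + (∑ v ∈ R \ S.1, ((-1 : k) ^ vpos S.1 v) * evalK k g (insert v S.1))
    rw [← Finset.sum_add_distrib]
    exact Finset.sum_congr rfl fun v _ => by rw [evalK_add, mul_add]
  map_smul' s f := by
    funext S
    show (∑ v ∈ R \ S.1, ((-1 : k) ^ vpos S.1 v) * evalK k (s • f) (insert v S.1))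
      = s * ∑ v ∈ R \ S.1, ((-1 : k) ^ vpos S.1 v) * evalK k f (insert v S.1)
    rw [Finset.mul_sum]
    exact Finset.sum_congr rfl fun v _ => by rw [evalK_smul]; ring

end SqfIdeal

/-- The multigraded Betti number `β_{i,R}(I) = dim_k Tor_i(I,k)_R` of a
squarefree monomial ideal in the squarefree multidegree `R`, computed as the
dimension of the `i`-th homology of the degree-`R` strand of the Koszul
complex. -/
def multiBetti (k : Type w) [Field k] {W : Type u} (I : SqfIdeal W) (i : ℤ)
    (R : Finset W) : ℕ :=
  Module.finrank k (LinearMap.ker (SqfIdeal.koszulD k I R i)) -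
    Module.finrank k (LinearMap.range (SqfIdeal.koszulD k I R (i + 1)))

/-- The graded Betti number `β_{i,j}(I) = dim_k Tor_i(I,k)_j` of a squarefree
monomial ideal: the sum of the multigraded Betti numbers over the (squarefree)
multidegrees of cardinality `j`. -/
def gradedBetti (k : Type w) [Field k] {W : Type u} [Fintype W] (I : SqfIdeal W)
    (i : ℤ) (j : ℤ) : ℕ :=
  if 0 ≤ j then
    ∑ R ∈ Finset.powersetCard j.toNat (Finset.univ : Finset W), multiBetti k I i R
  else 0

/-- The `n`-th letterplace ideal `L(n,P)` of a poset `P`: the squarefree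
monomial ideal on the variables `x_{(i,p)}`, `(i,p) ∈ [n] × P`, generated by
the monomials `x_{(1,p₁)} ⋯ x_{(n,pₙ)}` with `p₁ ≤ p₂ ≤ ⋯ ≤ pₙ` in `P`. -/
def letterplace (n : ℕ) (P : Type u) [PartialOrder P] : SqfIdeal (Fin n × P) where
  carrier := {T | ∃ c : Fin n → P, Monotone c ∧ ∀ i, (i, c i) ∈ T}
  up_closed := by
    rintro S T ⟨c, hc, hm⟩ hST
    exact ⟨c, hc, fun i => hST (hm i)⟩

/-- The `i`-th part `R_i ⊆ P` of a multidegree `R ⊆ [n] × P`. -/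
def part {n : ℕ} {P : Type u} (R : Finset (Fin n × P)) (i : Fin n) : Finset P :=
  (R.filter fun q => q.1 = i).image Prod.snd

/-- The set of maximal elements of the induced subposet on `A`. -/
def maxSet {P : Type u} [PartialOrder P] (A : Finset P) : Finset P :=
  A.filter fun a => ∀ b ∈ A, a ≤ b → a = b

/-- The set of minimal elements of the induced subposet on `A`. -/
def minSet {P : Type u} [PartialOrder P] (A : Finset P) : Finset P :=
  A.filter fun a => ∀ b ∈ A, b ≤ a → a = b

/-- The transitive order `A ≤ B` on subsets of a poset: every maximal element
of `A` is below some minimal element of `B`, and every minimal element of `B`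
is above some maximal element of `A`. -/
def subsetLE {P : Type u} [PartialOrder P] (A B : Finset P) : Prop :=
  (∀ a ∈ maxSet A, ∃ b ∈ minSet B, a ≤ b) ∧
  (∀ b ∈ minSet B, ∃ a ∈ maxSet A, a ≤ b)

/-- The independence complex of the bipartite graph on two disjoint copies of
`P`, with left vertex set `A`, right vertex set `B`, and edges the pairs
`(p, q) ∈ A × B` with `p ≤ q` in `P`. -/
def XComplex {P : Type u} [PartialOrder P] (A B : Finset P) : SComplex (P ⊕ P) where
  faces := {F | (∀ x ∈ F, Sum.elim (· ∈ A) (· ∈ B) x) ∧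
                ∀ p q : P, Sum.inl p ∈ F → Sum.inr q ∈ F → ¬ p ≤ q}
  down_closed := by
    intro F G hF hGF
    exact ⟨fun x hx => hF.1 x (hGF hx), fun p q hp hq => hF.2 p q (hGF hp) (hGF hq)⟩

/-- `Y₁`: the simplicial complex on `A` whose faces are the subsets `F ⊆ A`
such that some `b ∈ B` dominates no element of `F`. -/
def Y1Complex {P : Type u} [PartialOrder P] (A B : Finset P) : SComplex P where
  faces := {F | (∀ x ∈ F, x ∈ A) ∧ ∃ b ∈ B, ∀ a ∈ F, ¬ a ≤ b}
  down_closed := by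
    rintro F G ⟨hFA, b, hb, hFb⟩ hGF
    exact ⟨fun x hx => hFA x (hGF hx), b, hb, fun a ha => hFb a (hGF ha)⟩

/-- `Y₂`: the simplicial complex on `B` whose faces are the subsets `F ⊆ B`
such that some `a ∈ A` is dominated by no element of `F`. -/
def Y2Complex {P : Type u} [PartialOrder P] (A B : Finset P) : SComplex P where
  faces := {F | (∀ x ∈ F, x ∈ B) ∧ ∃ a ∈ A, ∀ b ∈ F, ¬ a ≤ b}
  down_closed := by
    rintro F G ⟨hFB, a, ha, hFa⟩ hGF
    exact ⟨fun x hx => hFB x (hGF hx), a, ha, fun b hb => hFa b (hGF hb)⟩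

/-- The restriction `Δ(n,P)|_R` of the Stanley–Reisner complex of the
letterplace ideal `L(n,P)` to the vertex set `R`. -/
def deltaRes (n : ℕ) (P : Type u) [PartialOrder P] (R : Finset (Fin n × P)) :
    SComplex (Fin n × P) where
  faces := {F | F ⊆ R ∧ ¬ ∃ c : Fin n → P, Monotone c ∧ ∀ i, (i, c i) ∈ F}
  down_closed := by
    rintro F G ⟨hFR, hF⟩ hGF
    exact ⟨hGF.trans hFR, fun ⟨c, hc, hm⟩ => hF ⟨c, hc, fun i => hGF (hm i)⟩⟩

/-- `A` is a maximal antichain of the poset `P`. -/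
def LPIsMaxAntichain {P : Type u} [PartialOrder P] (A : Finset P) : Prop :=
  IsAntichain (· ≤ ·) (A : Set P) ∧
    ∀ B : Finset P, IsAntichain (· ≤ ·) (B : Set P) → A ⊆ B → A = B

/-- The maximal cardinality of an antichain in the finite poset `P`. -/
def maxAntichainCard (P : Type u) [PartialOrder P] [Fintype P] : ℕ :=
  Finset.sup (Finset.univ.filter fun A : Finset P => IsAntichain (· ≤ ·) (A : Set P))
    Finset.card

/-- The independence complex of a bipartite graph, with parts `A` and `B` and
edge relation `E`. -/
def bipIndep {A : Type u} {B : Type v} (E : A → B → Prop) : SComplex (A ⊕ B) where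
  faces := {F | ∀ a b, Sum.inl a ∈ F → Sum.inr b ∈ F → ¬ E a b}
  down_closed := by
    intro F G hF hGF a b ha hb
    exact hF a b (hGF ha) (hGF hb)


/-!
If `R₁ ≤ R₂` fails, then some `a ∈ R₁` lies below no minimal element of `R₂`, or dually some
`b ∈ R₂` lies above no maximal element of `R₁`. In the first case each vertex `(1, b)` with
`a ≤ b` is dominated by `(1, b')` for a minimal `b' ≤ b`: every face through `(1, b)` remains a
face when `(1, b')` is added. Once these vertices are deleted, `(0, a)` is a cone point.

Topologically, the vertex map folding each dominated vertex onto its dominating vertex is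
contiguous both to the identity and to the constant map at the apex, so `Δ(2,P)|_R` is
contractible. Algebraically, one deletes the dominated vertices one at a time. For reduced
cochains, a cocycle is a coboundary on the deletion of `d` by induction, and the remainder, which
lives on faces through `d`, is killed by the cone homotopy towards the vertex dominating `d`. The
Koszul strand of `L(2,P)` in degree `R` has a basis of the sets `S ⊆ R` whose complement is a
non-face; there, the strand for `R \ {d}` is the part spanned by the `S ∋ d`, and the remainder,
which lives on the `S ∌ d`, is again killed by a cone homotopy.
-/

section Signs

variable {V : Type u} {k : Type w} [Field k]

lemma vpos_insert_self (v : V) (S : Finset V) : vpos (insert v S) v = vpos S v := by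
  simp only [vpos, Finset.filter_insert, if_neg (irrefl_of WellOrderingRel v)]

lemma vpos_erase_self (v : V) (S : Finset V) : vpos (S.erase v) v = vpos S v := by
  by_cases hv : v ∈ S
  · rw [← vpos_insert_self v (S.erase v), Finset.insert_erase hv]
  · rw [Finset.erase_eq_of_notMem hv]

lemma vpos_insert {v : V} {S : Finset V} (hv : v ∉ S) (w : V) :
    vpos (insert v S) w = vpos S w + if WellOrderingRel v w then 1 else 0 := by
  unfold vpos
  split_ifs with h
  · rw [Finset.filter_insert, if_pos h,
      Finset.card_insert_of_notMem fun hm => hv (Finset.mem_filter.1 hm).1]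
  · rw [Finset.filter_insert, if_neg h, add_zero]

lemma vpos_insert_add_vpos_insert {v w : V} {S : Finset V} (hv : v ∉ S) (hw : w ∉ S)
    (hvw : v ≠ w) : vpos (insert v S) w + vpos (insert w S) v = vpos S w + vpos S v + 1 := by
  rw [vpos_insert hv, vpos_insert hw]
  rcases trichotomous_of WellOrderingRel v w with h | h | h
  · simp [h, asymm_of WellOrderingRel h]; omega
  · exact absurd h hvw
  · simp [h, asymm_of WellOrderingRel h]; omega

lemma neg_one_pow_eq_neg_of_odd_add {a b : ℕ} (h : Odd (a + b)) :
    (-1 : k) ^ a = -(-1) ^ b := by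
  have hab : (-1 : k) ^ a * (-1) ^ b = -1 := by rw [← pow_add, h.neg_one_pow]
  have hb : (-1 : k) ^ b * (-1) ^ b = 1 := by rw [← pow_add, Even.neg_one_pow ⟨b, rfl⟩]
  linear_combination (-1 : k) ^ b * hab - (-1 : k) ^ a * hb

lemma neg_one_pow_vpos_insert_swap {v w : V} {S : Finset V} (hv : v ∉ S) (hw : w ∉ S)
    (hvw : v ≠ w) :
    (-1 : k) ^ (vpos S v + vpos (insert v S) w) = -(-1) ^ (vpos S w + vpos (insert w S) v) := by
  apply neg_one_pow_eq_neg_of_odd_add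
  have := vpos_insert_add_vpos_insert hv hw hvw
  exact ⟨vpos S v + vpos S w, by omega⟩

lemma neg_one_pow_vpos_erase_swap {v w : V} {S : Finset V} (hv : v ∈ S) (hw : w ∈ S)
    (hvw : v ≠ w) :
    (-1 : k) ^ (vpos S v + vpos (S.erase v) w) = -(-1) ^ (vpos S w + vpos (S.erase w) v) := by
  set T := (S.erase v).erase w
  have hvT : v ∉ T := fun h => (Finset.mem_erase.1 (Finset.mem_of_mem_erase h)).1 rfl
  have hwT : w ∉ T := fun h => (Finset.mem_erase.1 h).1 rfl
  have hSv : S.erase v = insert w T :=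
    (Finset.insert_erase (Finset.mem_erase.2 ⟨hvw.symm, hw⟩)).symm
  have hSw : S.erase w = insert v T := by
    rw [show T = (S.erase w).erase v from Finset.erase_right_comm]
    exact (Finset.insert_erase (Finset.mem_erase.2 ⟨hvw, hv⟩)).symm
  have hS : S = insert v (insert w T) := by rw [← hSv, Finset.insert_erase hv]
  have hSv' : vpos S v = vpos (insert w T) v := by rw [hS, vpos_insert_self]
  have hSw' : vpos S w = vpos (insert v T) w := by rw [hS, Finset.insert_comm, vpos_insert_self]
  rw [hSv, hSw, hSv', hSw', vpos_insert_self, vpos_insert_self, add_comm (vpos (insert w T) v),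
    add_comm (vpos (insert v T) w)]
  exact neg_one_pow_vpos_insert_swap hwT hvT hvw.symm

lemma neg_one_pow_vpos_erase_insert_swap {v w : V} {S : Finset V} (hv : v ∈ S) (hw : w ∉ S) :
    (-1 : k) ^ (vpos S v + vpos (S.erase v) w) = -(-1) ^ (vpos S w + vpos (insert w S) v) := by
  set T := S.erase v
  have hvT : v ∉ T := fun h => (Finset.mem_erase.1 h).1 rfl
  have hwT : w ∉ T := fun h => hw (Finset.mem_of_mem_erase h)
  have hvw : v ≠ w := fun h => hw (h ▸ hv)
  have hS : S = insert v T := (Finset.insert_erase hv).symm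
  rw [hS, vpos_insert_self, Finset.insert_comm, vpos_insert_self]
  apply neg_one_pow_eq_neg_of_odd_add
  have := vpos_insert_add_vpos_insert hvT hwT hvw
  exact ⟨vpos T v + vpos T w, by omega⟩

lemma sum_sum_erase_eq_zero_of_antisymm {M : Type v} [AddCommGroup M] (S : Finset V)
    (t : V → V → M) (ht : ∀ v ∈ S, ∀ w ∈ S, v ≠ w → t v w = -t w v) :
    ∑ v ∈ S, ∑ w ∈ S.erase v, t v w = 0 := by
  rw [Finset.sum_sigma']
  refine Finset.sum_involution (fun p _ => ⟨p.2, p.1⟩) ?_ ?_ ?_ ?_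
  · rintro ⟨v, w⟩ hp
    simp only [Finset.mem_sigma, Finset.mem_erase] at hp
    rw [ht v hp.1 w hp.2.2 hp.2.1.symm, neg_add_cancel]
  · rintro ⟨v, w⟩ hp _ h
    simp only [Finset.mem_sigma, Finset.mem_erase] at hp
    exact hp.2.1 (congrArg Sigma.fst h)
  · rintro ⟨v, w⟩ hp
    simp only [Finset.mem_sigma, Finset.mem_erase] at hp ⊢
    exact ⟨hp.2.2, hp.2.1.symm, hp.1⟩
  · intro p _
    rfl

end Signs

namespace SComplex

variable {V : Type u}

lemma ext_faces {X Y : SComplex V} (h : X.faces = Y.faces) : X = Y := by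
  cases X; cases Y; cases h; rfl

/-- `X`, on the vertex set `R`, strong-collapses to a cone: each `d ∈ D` is dominated by some
`w ∈ R \ D`, so the vertices of `D` can be deleted one at a time, and what remains is a cone with
apex `z`. -/
structure CollapsesToCone (X : SComplex V) (R : Finset V) (z : V) (D : Finset V) : Prop where
  apex_mem : z ∈ R
  apex_notMem : z ∉ D
  subset : D ⊆ R
  dominated : ∀ d ∈ D, ∃ w ∈ R, w ∉ D ∧ ∀ F ∈ X.faces, d ∈ F → insert w F ∈ X.faces
  cone : ∀ F ∈ X.faces, (∀ d ∈ D, d ∉ F) → insert z F ∈ X.faces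

lemma CollapsesToCone.delete {X : SComplex V} {R D : Finset V} {z d : V}
    (h : X.CollapsesToCone R z (insert d D)) (hd : d ∉ D) :
    (X.restrict {v | v ≠ d}).CollapsesToCone (R.erase d) z D where
  apex_mem := Finset.mem_erase.2 ⟨fun hzd => h.apex_notMem (hzd ▸ Finset.mem_insert_self d D),
    h.apex_mem⟩
  apex_notMem hz := h.apex_notMem (Finset.mem_insert_of_mem hz)
  subset e he := Finset.mem_erase.2 ⟨fun hed => hd (hed ▸ he),
    h.subset (Finset.mem_insert_of_mem he)⟩
  dominated e he := by
    obtain ⟨w, hwR, hwD, hw⟩ := h.dominated e (Finset.mem_insert_of_mem he)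
    have hwd : w ≠ d := fun hwd => hwD (hwd ▸ Finset.mem_insert_self d D)
    refine ⟨w, Finset.mem_erase.2 ⟨hwd, hwR⟩, fun hwD' => hwD (Finset.mem_insert_of_mem hwD'),
      fun F hF heF => ⟨hw F hF.1 heF, fun v hv => ?_⟩⟩
    rcases Finset.mem_insert.1 hv with rfl | hv
    exacts [hwd, hF.2 v hv]
  cone F hF hDF := by
    refine ⟨h.cone F hF.1 fun e he => ?_, fun v hv => ?_⟩
    · rcases Finset.mem_insert.1 he with rfl | he
      exacts [fun hdF => hF.2 e hdF rfl, hDF e he]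
    · rcases Finset.mem_insert.1 hv with rfl | hv
      exacts [fun hzd => h.apex_notMem (hzd ▸ Finset.mem_insert_self d D), hF.2 v hv]

variable (k : Type w) [Field k]

lemma evalC_of_mem {X : SComplex V} {i : ℤ} (f : cochain k X i) {F : Finset V}
    (h : F ∈ X.faces ∧ (F.card : ℤ) = i + 1) : evalC k f F = f ⟨F, h⟩ :=
  dif_pos h

lemma evalC_of_card_ne {X : SComplex V} {i : ℤ} (f : cochain k X i) {F : Finset V}
    (h : (F.card : ℤ) ≠ i + 1) : evalC k f F = 0 :=
  dif_neg fun hF => h hF.2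

lemma evalC_of_notMem {X : SComplex V} {i : ℤ} (f : cochain k X i) {F : Finset V}
    (h : F ∉ X.faces) : evalC k f F = 0 :=
  dif_neg fun hF => h hF.1

lemma coboundary_apply (X : SComplex V) (i : ℤ) (f : cochain k X i) (F : Face X (i + 1)) :
    coboundary k X i f F = ∑ v ∈ F.1, (-1 : k) ^ vpos F.1 v * evalC k f (F.1.erase v) :=
  rfl

lemma evalC_coboundary {X : SComplex V} {i : ℤ} (f : cochain k X i) {F : Finset V}
    (hF : F ∈ X.faces) (hcard : (F.card : ℤ) = i + 1 + 1) :
    evalC k (coboundary k X i f) F = ∑ v ∈ F, (-1 : k) ^ vpos F v * evalC k f (F.erase v) := by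
  rw [evalC_of_mem k _ ⟨hF, hcard⟩, coboundary_apply]

lemma coboundary_coboundary (X : SComplex V) (j : ℤ) (c : cochain k X j) :
    coboundary k X (j + 1) (coboundary k X j c) = 0 := by
  funext ⟨S, hS, hcard⟩
  rw [coboundary_apply, Pi.zero_apply]
  calc ∑ v ∈ S, (-1 : k) ^ vpos S v * evalC k (coboundary k X j c) (S.erase v)
      = ∑ v ∈ S, ∑ w ∈ S.erase v, (-1 : k) ^ (vpos S v + vpos (S.erase v) w) *
          evalC k c ((S.erase v).erase w) := by
        refine Finset.sum_congr rfl fun v hv => ?_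
        rw [evalC_coboundary k c (X.down_closed hS (Finset.erase_subset v S))
          (by rw [Finset.cast_card_erase_of_mem hv, hcard]; ring), Finset.mul_sum]
        simp only [pow_add, mul_assoc]
    _ = 0 := sum_sum_erase_eq_zero_of_antisymm S _ fun v hv w hw hvw => by
        rw [Finset.erase_right_comm, neg_one_pow_vpos_erase_swap hv hw hvw, neg_mul]

def coneHomotopy (X : SComplex V) (z : V) (m : ℤ) : cochain k X (m + 1) →ₗ[k] cochain k X m where
  toFun f G := (-1 : k) ^ vpos G.1 z * evalC k f (insert z G.1)
  map_add' f g := by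
    funext G
    simp only [evalC_add, Pi.add_apply]
    ring
  map_smul' c f := by
    funext G
    simp only [evalC_smul, Pi.smul_apply, smul_eq_mul, RingHom.id_apply]
    ring

lemma evalC_coneHomotopy {X : SComplex V} {z : V} {m : ℤ} (f : cochain k X (m + 1))
    {T : Finset V} (hT : T ∈ X.faces) (hcard : (T.card : ℤ) = m + 1) :
    evalC k (coneHomotopy k X z m f) T = (-1 : k) ^ vpos T z * evalC k f (insert z T) := by
  rw [evalC_of_mem k _ ⟨hT, hcard⟩]
  rfl

lemma coboundary_coneHomotopy_add {X : SComplex V} {z : V} {E : Finset V} (hzE : z ∉ E)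
    (hcone : ∀ F ∈ X.faces, E ⊆ F → insert z F ∈ X.faces) {j : ℤ} (f : cochain k X (j + 1))
    (hf : ∀ G : Face X (j + 1), ¬ E ⊆ G.1 → f G = 0) :
    coboundary k X j (coneHomotopy k X z j f) +
      coneHomotopy k X z (j + 1) (coboundary k X (j + 1) f) = f := by
  funext ⟨S, hS, hcard⟩
  have hfS : ∀ T : Finset V, ¬ E ⊆ T → evalC k f T = 0 := fun T hT => by
    unfold evalC; split_ifs with h
    exacts [hf ⟨T, h⟩ hT, rfl]
  have hcard_erase : ∀ v ∈ S, ((S.erase v).card : ℤ) = j + 1 := fun v hv => by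
    rw [Finset.cast_card_erase_of_mem hv, hcard]; ring
  rw [Pi.add_apply, coboundary_apply]
  show ∑ v ∈ S, _ + (-1 : k) ^ vpos S z * evalC k (coboundary k X (j + 1) f) (insert z S) = _
  rw [Finset.sum_congr rfl fun v hv => by
    rw [evalC_coneHomotopy k f (X.down_closed hS (Finset.erase_subset v S)) (hcard_erase v hv)]]
  by_cases hzS : z ∈ S
  · have hz : ∀ v ∈ S, v ≠ z → evalC k f (insert z (S.erase v)) = 0 := fun v hv hvz => by
      rw [Finset.insert_eq_self.2 (Finset.mem_erase.2 ⟨hvz.symm, hzS⟩)]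
      exact evalC_of_card_ne k f (by rw [hcard_erase v hv]; omega)
    rw [Finset.insert_eq_self.2 hzS, evalC_of_card_ne k _ (by rw [hcard]; omega), mul_zero,
      add_zero, Finset.sum_eq_single_of_mem z hzS fun v hv hvz => by rw [hz v hv hvz]; ring,
      Finset.insert_erase hzS, vpos_erase_self, evalC_of_mem k f ⟨hS, hcard⟩, ← mul_assoc,
      ← pow_add, Even.neg_one_pow ⟨_, rfl⟩, one_mul]
  by_cases hzS' : insert z S ∈ X.faces
  · have hcard' : ((insert z S).card : ℤ) = j + 1 + 1 + 1 := by
      rw [Finset.card_insert_of_notMem hzS]; push_cast; omega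
    rw [evalC_coboundary k f hzS' hcard', Finset.sum_insert hzS, Finset.erase_insert hzS,
      vpos_insert_self, evalC_of_mem k f ⟨hS, hcard⟩, mul_add, ← mul_assoc, ← pow_add,
      Even.neg_one_pow ⟨_, rfl⟩, one_mul, Finset.mul_sum, ← add_assoc, add_right_comm,
      ← Finset.sum_add_distrib, add_eq_right]
    refine Finset.sum_eq_zero fun v hv => ?_
    rw [Finset.erase_insert_of_ne fun h : z = v => hzS (h ▸ hv), ← mul_assoc, ← mul_assoc,
      ← pow_add, ← pow_add, neg_one_pow_vpos_erase_insert_swap hv hzS]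
    ring
  · have hES : ¬ E ⊆ S := fun h => hzS' (hcone S hS h)
    have hE : ∀ v, ¬ E ⊆ insert z (S.erase v) := fun v h =>
      hES fun e he => Finset.mem_of_mem_erase ((Finset.mem_insert.1 (h he)).resolve_left
        fun hez => hzE (hez ▸ he))
    rw [evalC_of_notMem k _ hzS', hf _ hES, mul_zero, add_zero]
    exact Finset.sum_eq_zero fun v _ => by rw [hfS _ (hE v), mul_zero, mul_zero]

def restrictCochain {X : SComplex V} {S : Set V} {m : ℤ} (f : cochain k X m) :
    cochain k (X.restrict S) m :=
  fun G => f ⟨G.1, G.2.1.1, G.2.2⟩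

def extendCochain {X : SComplex V} {S : Set V} {m : ℤ} (f : cochain k (X.restrict S) m) :
    cochain k X m :=
  fun F => if h : ∀ v ∈ F.1, v ∈ S then f ⟨F.1, ⟨F.2.1, h⟩, F.2.2⟩ else 0

lemma restrictCochain_extendCochain {X : SComplex V} {S : Set V} {m : ℤ}
    (f : cochain k (X.restrict S) m) : restrictCochain k (extendCochain k f) = f :=
  funext fun G => dif_pos G.2.1.2

lemma evalC_restrictCochain {X : SComplex V} {S : Set V} {m : ℤ} (f : cochain k X m)
    {T : Finset V} (hT : ∀ v ∈ T, v ∈ S) :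
    evalC k (restrictCochain k (S := S) f) T = evalC k f T := by
  by_cases h : T ∈ X.faces ∧ (T.card : ℤ) = m + 1
  · rw [evalC_of_mem k f h, evalC_of_mem k (restrictCochain k (S := S) f) ⟨⟨h.1, hT⟩, h.2⟩]
    rfl
  · rw [evalC, evalC, dif_neg h, dif_neg fun h' => h ⟨h'.1.1, h'.2⟩]

lemma coboundary_restrictCochain {X : SComplex V} {S : Set V} {m : ℤ} (f : cochain k X m) :
    coboundary k (X.restrict S) m (restrictCochain k f) =
      restrictCochain k (coboundary k X m f) := by
  funext G
  refine Finset.sum_congr rfl fun v _ => ?_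
  rw [evalC_restrictCochain k f fun u hu => G.2.1.2 u (Finset.mem_of_mem_erase hu)]

lemma CollapsesToCone.exists_coboundary_eq {X : SComplex V} {R : Finset V} {z : V}
    {D : Finset V} (h : X.CollapsesToCone R z D) {j : ℤ} (f : cochain k X (j + 1))
    (hf : coboundary k X (j + 1) f = 0) : ∃ c, coboundary k X j c = f := by
  induction D using Finset.induction_on generalizing X R with
  | empty =>
    have := coboundary_coneHomotopy_add k (Finset.notMem_empty z)
      (fun F hF _ => h.cone F hF fun _ hd => absurd hd (Finset.notMem_empty _)) f
      fun G hG => absurd (Finset.empty_subset _) hG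
    rw [hf, map_zero, add_zero] at this
    exact ⟨_, this⟩
  | insert d D hd ih =>
    obtain ⟨c', hc'⟩ := ih (h.delete hd) (restrictCochain k f) <| by
      rw [coboundary_restrictCochain, hf]; rfl
    set c := extendCochain k c'
    obtain ⟨w, -, hwD, hw⟩ := h.dominated d (Finset.mem_insert_self d D)
    have hwd : w ∉ ({d} : Finset V) := fun hwd =>
      hwD (Finset.mem_singleton.1 hwd ▸ Finset.mem_insert_self d D)
    have hsupp : ∀ G : Face X (j + 1), ¬ {d} ⊆ G.1 → (f - coboundary k X j c) G = 0 := by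
      rintro ⟨G, hG, hcard⟩ hdG
      have hG' : ∀ v ∈ G, v ∈ {v | v ≠ d} := fun v hv hvd =>
        hdG (Finset.singleton_subset_iff.2 (hvd ▸ hv))
      have := congrFun (coboundary_restrictCochain k c) ⟨G, ⟨hG, hG'⟩, hcard⟩
      rw [restrictCochain_extendCochain, hc'] at this
      exact sub_eq_zero.2 this
    have := coboundary_coneHomotopy_add k hwd
      (fun F hF hdF => hw F hF (Finset.singleton_subset_iff.1 hdF)) _ hsupp
    rw [map_sub (coboundary k X (j + 1)), hf, coboundary_coboundary, sub_zero, map_zero,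
      add_zero] at this
    exact ⟨c + coneHomotopy k X w j (f - coboundary k X j c), by rw [map_add, this, add_sub_cancel]⟩

lemma CollapsesToCone.redCohomDim_eq_zero [Finite V] {X : SComplex V} {R : Finset V} {z : V}
    {D : Finset V} (h : X.CollapsesToCone R z D) (i : ℤ) : redCohomDim k X i = 0 := by
  refine Nat.sub_eq_zero_of_le ?_
  calc Module.finrank k (LinearMap.ker (coboundary k X i))
      = Module.finrank k (LinearMap.ker (coboundary k X (i - 1 + 1))) := by rw [sub_add_cancel]
    _ ≤ Module.finrank k (LinearMap.range (coboundary k X (i - 1))) :=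
      Submodule.finrank_mono fun f hf => h.exists_coboundary_eq k f hf

end SComplex

lemma Finset.erase_sdiff_eq_sdiff_insert {V : Type u} [DecidableEq V] (R T : Finset V) (d : V) :
    R.erase d \ T = R \ insert d T := by
  rw [Finset.erase_sdiff_comm, Finset.sdiff_insert]

namespace SqfIdeal

variable {V : Type u}

/-- The restriction to `R` of the Stanley–Reisner complex of `I`. -/
def complexAt (I : SqfIdeal V) (R : Finset V) : SComplex V where
  faces := {T | T ⊆ R ∧ T ∉ I.carrier}
  down_closed hF hGF := ⟨hGF.trans hF.1, fun hG => hF.2 (I.up_closed hG hGF)⟩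

lemma complexAt_erase (I : SqfIdeal V) (R : Finset V) (d : V) :
    I.complexAt (R.erase d) = (I.complexAt R).restrict {v | v ≠ d} :=
  SComplex.ext_faces <| Set.ext fun _ =>
    ⟨fun hT => ⟨⟨hT.1.trans (Finset.erase_subset d R), hT.2⟩,
        fun _ hv => (Finset.mem_erase.1 (hT.1 hv)).1⟩,
      fun hT => ⟨fun v hv => Finset.mem_erase.2 ⟨hT.2 v hv, hT.1.1 hv⟩, hT.1.2⟩⟩

/-- The cone condition for `z` at `R \ insert z S`, read on the complement `S`, which indexes the
Koszul strand. -/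
lemma sdiff_insert_mem_carrier {I : SqfIdeal V} {R S : Finset V} {z : V} (hzR : z ∈ R)
    (hzS : z ∉ S) (hS : R \ S ∈ I.carrier)
    (hcone : R \ insert z S ∈ (I.complexAt R).faces →
      insert z (R \ insert z S) ∈ (I.complexAt R).faces) :
    R \ insert z S ∈ I.carrier := by
  by_contra h
  have := (hcone ⟨Finset.sdiff_subset, h⟩).2
  rw [Finset.sdiff_insert, Finset.insert_erase (Finset.mem_sdiff.2 ⟨hzR, hzS⟩)] at this
  exact this hS

variable (k : Type w) [Field k] {I : SqfIdeal V} {R : Finset V}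

lemma evalK_of_mem {i : ℤ} (f : kchain k I R i) {S : Finset V}
    (h : S ⊆ R ∧ (S.card : ℤ) = i ∧ R \ S ∈ I.carrier) : evalK k f S = f ⟨S, h⟩ :=
  dif_pos h

lemma evalK_of_card_ne {i : ℤ} (f : kchain k I R i) {S : Finset V} (h : (S.card : ℤ) ≠ i) :
    evalK k f S = 0 :=
  dif_neg fun hS => h hS.2.1

lemma evalK_of_sdiff_notMem {i : ℤ} (f : kchain k I R i) {S : Finset V}
    (h : R \ S ∉ I.carrier) : evalK k f S = 0 :=
  dif_neg fun hS => h hS.2.2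

lemma koszulD_apply {i : ℤ} (f : kchain k I R i) (S : KBasis I R (i - 1)) :
    koszulD k I R i f S = ∑ v ∈ R \ S.1, (-1 : k) ^ vpos S.1 v * evalK k f (insert v S.1) :=
  rfl

lemma evalK_koszulD {i : ℤ} (f : kchain k I R i) {S : Finset V} (hSR : S ⊆ R)
    (hcard : (S.card : ℤ) = i - 1) :
    evalK k (koszulD k I R i f) S = ∑ v ∈ R \ S, (-1 : k) ^ vpos S v * evalK k f (insert v S) := by
  by_cases hS : R \ S ∈ I.carrier
  · rw [evalK_of_mem k _ ⟨hSR, hcard, hS⟩, koszulD_apply]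
  · rw [evalK_of_sdiff_notMem k _ hS]
    refine (Finset.sum_eq_zero fun v _ => ?_).symm
    rw [evalK_of_sdiff_notMem k f fun h => hS (I.up_closed h (Finset.sdiff_subset_sdiff
      subset_rfl (Finset.subset_insert v S))), mul_zero]

lemma koszulD_koszulD (m : ℤ) (c : kchain k I R m) :
    koszulD k I R (m - 1) (koszulD k I R m c) = 0 := by
  funext ⟨S, hSR, hcard, _⟩
  rw [koszulD_apply, Pi.zero_apply]
  calc ∑ v ∈ R \ S, (-1 : k) ^ vpos S v * evalK k (koszulD k I R m c) (insert v S)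
      = ∑ v ∈ R \ S, ∑ w ∈ (R \ S).erase v, (-1 : k) ^ (vpos S v + vpos (insert v S) w) *
          evalK k c (insert w (insert v S)) := by
        refine Finset.sum_congr rfl fun v hv => ?_
        obtain ⟨hvR, hvS⟩ := Finset.mem_sdiff.1 hv
        rw [evalK_koszulD k c (Finset.insert_subset hvR hSR)
          (by rw [Finset.card_insert_of_notMem hvS]; push_cast; omega),
          Finset.sdiff_insert, Finset.mul_sum]
        simp only [pow_add, mul_assoc]
    _ = 0 := sum_sum_erase_eq_zero_of_antisymm (R \ S) _ fun v hv w hw hvw => by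
        rw [Finset.insert_comm, neg_one_pow_vpos_insert_swap (Finset.mem_sdiff.1 hv).2
          (Finset.mem_sdiff.1 hw).2 hvw, neg_mul]

def coneHomotopy (I : SqfIdeal V) (R : Finset V) (z : V) (m : ℤ) :
    kchain k I R (m - 1) →ₗ[k] kchain k I R m where
  toFun f S := (-1 : k) ^ vpos S.1 z * evalK k f (S.1.erase z)
  map_add' f g := by
    funext S
    simp only [evalK_add, Pi.add_apply]
    ring
  map_smul' c f := by
    funext S
    simp only [evalK_smul, Pi.smul_apply, smul_eq_mul, RingHom.id_apply]
    ring

lemma koszulD_coneHomotopy_add {z : V} (hzR : z ∈ R) {g : ℤ} (f : kchain k I R (g - 1))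
    (hf : ∀ S : KBasis I R (g - 1), z ∉ S.1 → R \ insert z S.1 ∉ I.carrier → f S = 0) :
    koszulD k I R g (coneHomotopy k I R z g f) +
      coneHomotopy k I R z (g - 1) (koszulD k I R (g - 1) f) = f := by
  have hfS : ∀ T, z ∉ T → R \ insert z T ∉ I.carrier → evalK k f T = 0 := fun T hzT hT => by
    unfold evalK; split_ifs with h
    exacts [hf ⟨T, h⟩ hzT hT, rfl]
  have hσ : ∀ T ⊆ R, (T.card : ℤ) = g →
      evalK k (coneHomotopy k I R z g f) T = (-1 : k) ^ vpos T z * evalK k f (T.erase z) := by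
    intro T hTR hcard
    by_cases hT : R \ T ∈ I.carrier
    · rw [evalK_of_mem k _ ⟨hTR, hcard, hT⟩]; rfl
    rw [evalK_of_sdiff_notMem k _ hT]
    by_cases hzT : z ∈ T
    · rw [hfS _ (Finset.notMem_erase z T) (by rwa [Finset.insert_erase hzT]), mul_zero]
    · rw [Finset.erase_eq_of_notMem hzT, evalK_of_card_ne k f (by omega), mul_zero]
  funext ⟨S, hSR, hcard, hSI⟩
  rw [Pi.add_apply, koszulD_apply]
  show _ + (-1 : k) ^ vpos S z * evalK k (koszulD k I R (g - 1) f) (S.erase z) = _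
  have hvS : ∀ v ∈ R \ S, ((insert v S).card : ℤ) = g := fun v hv => by
    rw [Finset.card_insert_of_notMem (Finset.mem_sdiff.1 hv).2]; push_cast; omega
  rw [Finset.sum_congr rfl fun v hv =>
    by rw [hσ _ (Finset.insert_subset (Finset.mem_sdiff.1 hv).1 hSR) (hvS v hv)]]
  by_cases hzS : z ∈ S
  · have hz : z ∉ R \ S := fun h => (Finset.mem_sdiff.1 h).2 hzS
    rw [evalK_koszulD k f ((Finset.erase_subset z S).trans hSR)
      (by rw [Finset.cast_card_erase_of_mem hzS, hcard]), Finset.sdiff_erase hzR,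
      Finset.sum_insert hz, Finset.insert_erase hzS, vpos_erase_self,
      evalK_of_mem k f ⟨hSR, hcard, hSI⟩, mul_add, ← mul_assoc, ← pow_add,
      Even.neg_one_pow ⟨_, rfl⟩, one_mul, Finset.mul_sum, ← add_assoc, add_right_comm,
      ← Finset.sum_add_distrib, add_eq_right]
    refine Finset.sum_eq_zero fun v hv => ?_
    have hvz : v ≠ z := fun h => hz (h ▸ hv)
    rw [Finset.erase_insert_of_ne hvz, ← mul_assoc, ← mul_assoc, ← pow_add, ← pow_add,
      neg_one_pow_vpos_erase_insert_swap hzS (Finset.mem_sdiff.1 hv).2]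
    ring
  · rw [Finset.erase_eq_of_notMem hzS, evalK_of_card_ne k _ (by rw [hcard]; omega), mul_zero,
      add_zero, Finset.sum_eq_single_of_mem z (Finset.mem_sdiff.2 ⟨hzR, hzS⟩) fun v hv hvz => by
        rw [Finset.erase_eq_of_notMem fun h => (Finset.mem_insert.1 h).elim hvz.symm hzS,
          evalK_of_card_ne k f (by rw [hvS v hv]; omega), mul_zero, mul_zero],
      Finset.erase_insert hzS, vpos_insert_self, evalK_of_mem k f ⟨hSR, hcard, hSI⟩, ← mul_assoc,
      ← pow_add, Even.neg_one_pow ⟨_, rfl⟩, one_mul]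

/-- The strand in degree `R \ {d}` is the part of the strand in degree `R` spanned by the sets
through `d`, via `S ↦ S ∪ {d}`. -/
def toLink (d : V) {m : ℤ} (f : kchain k I R m) : kchain k I (R.erase d) (m - 1) :=
  fun S => (-1 : k) ^ vpos S.1 d * evalK k f (insert d S.1)

def ofLink (d : V) {m : ℤ} (c : kchain k I (R.erase d) (m - 1)) : kchain k I R m :=
  fun S => if d ∈ S.1 then -((-1 : k) ^ vpos S.1 d * evalK k c (S.1.erase d)) else 0

lemma evalK_toLink {d : V} {m : ℤ} (f : kchain k I R m) {T : Finset V} (hTR : T ⊆ R.erase d)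
    (hcard : (T.card : ℤ) = m - 1) :
    evalK k (toLink k d f) T = (-1 : k) ^ vpos T d * evalK k f (insert d T) := by
  by_cases hT : R.erase d \ T ∈ I.carrier
  · rw [evalK_of_mem k _ ⟨hTR, hcard, hT⟩]; rfl
  · rw [evalK_of_sdiff_notMem k _ hT, evalK_of_sdiff_notMem k f
      (by rwa [← Finset.erase_sdiff_eq_sdiff_insert]), mul_zero]

lemma evalK_ofLink {d : V} {m : ℤ} (c : kchain k I (R.erase d) (m - 1)) {T : Finset V}
    (hTR : T ⊆ R) (hcard : (T.card : ℤ) = m) (hdT : d ∈ T) :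
    evalK k (ofLink k d c) T = -((-1 : k) ^ vpos T d * evalK k c (T.erase d)) := by
  have hsdiff : R.erase d \ T.erase d = R \ T := by
    rw [Finset.erase_sdiff_eq_sdiff_insert, Finset.insert_erase hdT]
  by_cases hT : R \ T ∈ I.carrier
  · rw [evalK_of_mem k _ ⟨hTR, hcard, hT⟩]
    exact if_pos hdT
  · rw [evalK_of_sdiff_notMem k _ hT, evalK_of_sdiff_notMem k c (by rwa [hsdiff]), mul_zero,
      neg_zero]

lemma koszulD_toLink {d : V} (hdR : d ∈ R) {m : ℤ} (f : kchain k I R m) :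
    koszulD k I (R.erase d) (m - 1) (toLink k d f) = -toLink k d (koszulD k I R m f) := by
  funext ⟨S, hSR, hcard, _⟩
  have hdS : d ∉ S := fun h => (Finset.mem_erase.1 (hSR h)).1 rfl
  rw [koszulD_apply, Pi.neg_apply]
  show _ = -((-1 : k) ^ vpos S d * evalK k (koszulD k I R m f) (insert d S))
  rw [evalK_koszulD k f (Finset.insert_subset hdR (hSR.trans (Finset.erase_subset d R)))
    (by rw [Finset.card_insert_of_notMem hdS]; push_cast; omega),
    ← Finset.erase_sdiff_eq_sdiff_insert, Finset.mul_sum, ← Finset.sum_neg_distrib]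
  refine Finset.sum_congr rfl fun v hv => ?_
  obtain ⟨hvR, hvS⟩ := Finset.mem_sdiff.1 hv
  rw [evalK_toLink k f (Finset.insert_subset hvR hSR)
    (by rw [Finset.card_insert_of_notMem hvS]; push_cast; omega), Finset.insert_comm,
    ← mul_assoc, ← mul_assoc, ← pow_add, ← pow_add,
    neg_one_pow_vpos_insert_swap hvS hdS (Finset.mem_erase.1 hvR).1]
  ring

lemma koszulD_ofLink_apply {d : V} {m : ℤ} (c : kchain k I (R.erase d) (m - 1))
    (S : KBasis I R (m - 1)) (hdS : d ∈ S.1) :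
    koszulD k I R m (ofLink k d c) S =
      (-1 : k) ^ vpos S.1 d * evalK k (koszulD k I (R.erase d) (m - 1) c) (S.1.erase d) := by
  obtain ⟨S, hSR, hcard, _⟩ := S
  have hdR : d ∈ R := hSR hdS
  rw [koszulD_apply, evalK_koszulD k c (fun v hv => Finset.mem_erase.2
      ⟨(Finset.mem_erase.1 hv).1, hSR (Finset.mem_of_mem_erase hv)⟩)
    (by rw [Finset.cast_card_erase_of_mem hdS, hcard]),
    Finset.erase_sdiff_eq_sdiff_insert, Finset.insert_erase hdS, Finset.mul_sum]
  refine Finset.sum_congr rfl fun v hv => ?_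
  obtain ⟨hvR, hvS⟩ := Finset.mem_sdiff.1 hv
  rw [evalK_ofLink k c (Finset.insert_subset hvR hSR)
    (by rw [Finset.card_insert_of_notMem hvS]; push_cast; omega) (Finset.mem_insert_of_mem hdS),
    Finset.erase_insert_of_ne fun h : v = d => hvS (h ▸ hdS)]
  have hsign := neg_one_pow_vpos_erase_insert_swap (k := k) hdS hvS
  rw [pow_add, pow_add] at hsign
  linear_combination (-evalK k c (insert v (S.erase d))) * hsign

lemma _root_.SComplex.CollapsesToCone.exists_koszulD_eq {z : V} {D : Finset V}
    (h : (I.complexAt R).CollapsesToCone R z D) {g : ℤ} (f : kchain k I R (g - 1))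
    (hf : koszulD k I R (g - 1) f = 0) : ∃ c, koszulD k I R g c = f := by
  induction D using Finset.induction_on generalizing R g with
  | empty =>
    have := koszulD_coneHomotopy_add k h.apex_mem f fun S hzS hS =>
      absurd (sdiff_insert_mem_carrier h.apex_mem hzS S.2.2.2 fun hU =>
        h.cone _ hU fun _ hd => absurd hd (Finset.notMem_empty _)) hS
    rw [hf, map_zero, add_zero] at this
    exact ⟨_, this⟩
  | insert d D hd ih =>
    have hdR : d ∈ R := h.subset (Finset.mem_insert_self d D)
    obtain ⟨c', hc'⟩ := ih (complexAt_erase I R d ▸ h.delete hd) (toLink k d f) <| by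
      rw [koszulD_toLink k hdR, hf, neg_eq_zero]
      funext S
      simp [toLink, evalK]
    set c := ofLink k d c'
    obtain ⟨w, hwR, hwD, hw⟩ := h.dominated d (Finset.mem_insert_self d D)
    have hwd : w ≠ d := fun hwd => hwD (hwd ▸ Finset.mem_insert_self d D)
    have hsupp : ∀ S : KBasis I R (g - 1), w ∉ S.1 → R \ insert w S.1 ∉ I.carrier →
        (f - koszulD k I R g c) S = 0 := by
      intro S hwS hS
      by_cases hdS : d ∈ S.1
      · rw [Pi.sub_apply, koszulD_ofLink_apply k c' S hdS, hc', evalK_toLink k f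
          (Finset.erase_subset_erase d S.2.1) (by rw [Finset.cast_card_erase_of_mem hdS, S.2.2.1]),
          vpos_erase_self, Finset.insert_erase hdS, evalK_of_mem k f S.2, ← mul_assoc, ← pow_add,
          Even.neg_one_pow ⟨_, rfl⟩, one_mul, sub_self]
      · exact absurd (sdiff_insert_mem_carrier hwR hwS S.2.2.2 fun hU => hw _ hU
          (Finset.mem_sdiff.2 ⟨hdR, fun h => (Finset.mem_insert.1 h).elim hwd.symm hdS⟩)) hS
    have := koszulD_coneHomotopy_add k hwR _ hsupp
    rw [map_sub (koszulD k I R (g - 1)), hf, koszulD_koszulD, sub_zero, map_zero,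
      add_zero] at this
    exact ⟨c + coneHomotopy k I R w g (f - koszulD k I R g c),
      by rw [map_add, this, add_sub_cancel]⟩

lemma _root_.SComplex.CollapsesToCone.multiBetti_eq_zero [Finite V] {z : V} {D : Finset V}
    (h : (I.complexAt R).CollapsesToCone R z D) (i : ℤ) : multiBetti k I i R = 0 := by
  refine Nat.sub_eq_zero_of_le ?_
  calc Module.finrank k (LinearMap.ker (koszulD k I R i))
      = Module.finrank k (LinearMap.ker (koszulD k I R (i + 1 - 1))) := by
        rw [add_sub_cancel_right]
    _ ≤ Module.finrank k (LinearMap.range (koszulD k I R (i + 1))) :=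
      Submodule.finrank_mono fun f hf => h.exists_koszulD_eq k f hf

end SqfIdeal

namespace SComplex

variable {V : Type u} [Fintype V]

lemma homotopic_of_exists_face {Y : Type v} [TopologicalSpace Y] {X : SComplex V}
    (f₀ f₁ : C(Y, X.realization))
    (h : ∀ y, ∃ F ∈ X.faces, ∀ v, (f₀ y).1 v ≠ 0 ∨ (f₁ y).1 v ≠ 0 → v ∈ F) :
    f₀.Homotopic f₁ := by
  have hmem : ∀ (t : unitInterval) (y : Y),
      (fun v => (1 - (t : ℝ)) * (f₀ y).1 v + t * (f₁ y).1 v) ∈ X.realization := by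
    intro t y
    obtain ⟨hpos₀, hsum₀, -⟩ := (f₀ y).2
    obtain ⟨hpos₁, hsum₁, -⟩ := (f₁ y).2
    obtain ⟨F, hF, hsupp⟩ := h y
    refine ⟨fun v => add_nonneg (mul_nonneg (by simpa using t.2.2) (hpos₀ v))
      (mul_nonneg t.2.1 (hpos₁ v)), ?_, F, hF, fun v hv => hsupp v ?_⟩
    · rw [Finset.sum_add_distrib, ← Finset.mul_sum, ← Finset.mul_sum, hsum₀, hsum₁]
      ring
    · by_contra! h0
      exact hv (by simp only [h0.1, h0.2, mul_zero, add_zero])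
  refine ⟨⟨⟨fun q => ⟨_, hmem q.1 q.2⟩, ?_⟩, fun y => ?_, fun y => ?_⟩⟩
  · have ht : Continuous fun q : unitInterval × Y => (q.1 : ℝ) :=
      continuous_subtype_val.comp continuous_fst
    have hf : ∀ (f : C(Y, X.realization)) v, Continuous fun q : unitInterval × Y => (f q.2).1 v :=
      fun f v => (continuous_apply v).comp (continuous_subtype_val.comp (f.continuous.comp
        continuous_snd))
    exact Continuous.subtype_mk (continuous_pi fun v =>
      ((continuous_const.sub ht).mul (hf f₀ v)).add (ht.mul (hf f₁ v))) _
  · ext v; simp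
  · ext v; simp

def pushWeight (g : V → V) (f : V → ℝ) : V → ℝ :=
  fun w => ∑ u ∈ Finset.univ.filter (g · = w), f u

lemma pushWeight_ne_zero {g : V → V} {f : V → ℝ} {w : V} (h : pushWeight g f w ≠ 0) :
    ∃ u, g u = w ∧ f u ≠ 0 := by
  obtain ⟨u, hu, hne⟩ := Finset.exists_ne_zero_of_sum_ne_zero h
  exact ⟨u, (Finset.mem_filter.1 hu).2, hne⟩

lemma pushWeight_mem_realization {X : SComplex V} {g : V → V}
    (hg : ∀ F ∈ X.faces, F.image g ∈ X.faces) {f : V → ℝ} (hf : f ∈ X.realization) :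
    pushWeight g f ∈ X.realization := by
  obtain ⟨hpos, hsum, F, hF, hsupp⟩ := hf
  refine ⟨fun w => Finset.sum_nonneg fun u _ => hpos u, ?_, F.image g, hg F hF, fun w hw => ?_⟩
  · rw [← hsum]
    exact Finset.sum_fiberwise_of_maps_to (fun u _ => Finset.mem_univ (g u)) f
  · obtain ⟨u, rfl, hu⟩ := pushWeight_ne_zero hw
    exact Finset.mem_image_of_mem g (hsupp u hu)

def pushMap {X : SComplex V} {g : V → V} (hg : ∀ F ∈ X.faces, F.image g ∈ X.faces) :
    C(X.realization, X.realization) where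
  toFun f := ⟨pushWeight g f.1, pushWeight_mem_realization hg f.2⟩
  continuous_toFun := Continuous.subtype_mk (continuous_pi fun _ =>
    continuous_finsetSum _ fun u _ => (continuous_apply u).comp continuous_subtype_val) _

/-- `g` is contiguous to the identity and to the constant map at `z`. -/
lemma contractibleSpace_realization {X : SComplex V} (h0 : ∅ ∈ X.faces) (g : V → V) (z : V)
    (hg : ∀ F ∈ X.faces, F ∪ F.image g ∈ X.faces)
    (hz : ∀ F ∈ X.faces, insert z (F.image g) ∈ X.faces) :
    ContractibleSpace X.realization := by
  have hz0 : ({z} : Finset V) ∈ X.faces := by simpa using hz ∅ h0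
  let p : X.realization := ⟨Pi.single z 1, fun v => by
    by_cases hv : v = z <;> simp [hv], by simp, {z}, hz0, fun v hv => by
    by_contra hvz; exact hv (Pi.single_eq_of_ne (by simpa using hvz) _)⟩
  have hgF : ∀ F ∈ X.faces, F.image g ∈ X.faces := fun F hF =>
    X.down_closed (hg F hF) Finset.subset_union_right
  rw [contractible_iff_id_nullhomotopic]
  refine ⟨p, (homotopic_of_exists_face _ (pushMap hgF) fun f => ?_).trans
    (homotopic_of_exists_face (pushMap hgF) _ fun f => ?_)⟩
  · obtain ⟨-, -, F, hF, hsupp⟩ := f.2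
    refine ⟨F ∪ F.image g, hg F hF, fun v hv => hv.elim (fun hv => ?_) fun hv => ?_⟩
    · exact Finset.mem_union_left _ (hsupp v hv)
    · obtain ⟨u, rfl, hu⟩ := pushWeight_ne_zero hv
      exact Finset.mem_union_right _ (Finset.mem_image_of_mem g (hsupp u hu))
  · obtain ⟨-, -, F, hF, hsupp⟩ := f.2
    refine ⟨insert z (F.image g), hz F hF, fun v hv => hv.elim (fun hv => ?_) fun hv => ?_⟩
    · obtain ⟨u, rfl, hu⟩ := pushWeight_ne_zero hv
      exact Finset.mem_insert_of_mem (Finset.mem_image_of_mem g (hsupp u hu))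
    · by_contra hvz
      exact hv (Pi.single_eq_of_ne (fun h => hvz (Finset.mem_insert.2 (Or.inl h))) _)

lemma CollapsesToCone.contractibleSpace {X : SComplex V} {R D : Finset V} {z : V}
    (h : X.CollapsesToCone R z D) (h0 : ∅ ∈ X.faces) : ContractibleSpace X.realization := by
  have : Nonempty V := ⟨z⟩
  choose! π _ hπD hπ using h.dominated
  let g : V → V := fun v => if v ∈ D then π v else v
  have hgD : ∀ v, g v ∉ D := fun v => by
    by_cases hvD : v ∈ D
    · simpa only [g, if_pos hvD] using hπD v hvD
    · simpa only [g, if_neg hvD] using hvD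
  have hg : ∀ F ∈ X.faces, F ∪ F.image g ∈ X.faces := by
    intro F hF
    suffices ∀ S ⊆ F, F ∪ S.image g ∈ X.faces from this F subset_rfl
    intro S
    induction S using Finset.induction_on with
    | empty => simpa using hF
    | insert a S _ ih =>
      intro hSF
      have haF : a ∈ F := hSF (Finset.mem_insert_self a S)
      rw [Finset.image_insert, Finset.union_insert]
      by_cases haD : a ∈ D
      · simpa only [g, if_pos haD] using
          hπ a haD _ (ih ((Finset.subset_insert a S).trans hSF)) (Finset.mem_union_left _ haF)
      · rw [show g a = a from if_neg haD,
          Finset.insert_eq_self.2 (Finset.mem_union_left _ haF)]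
        exact ih ((Finset.subset_insert a S).trans hSF)
  refine contractibleSpace_realization h0 g z hg fun F hF => h.cone _
    (X.down_closed (hg F hF) Finset.subset_union_right) fun d hd hdF => ?_
  obtain ⟨v, -, rfl⟩ := Finset.mem_image.1 hdF
  exact hgD v hd

end SComplex

section Letterplace

-- `CollapsesToCone` is stated with the classical `DecidableEq` instance, so `insert` must use
-- it here too.
attribute [-instance] instDecidableEqProd

lemma mem_part {P : Type u} {n : ℕ} {R : Finset (Fin n × P)} {i : Fin n} {p : P} :
    p ∈ part R i ↔ (i, p) ∈ R := by
  simp [part]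

variable {P : Type u} [PartialOrder P]

lemma mem_deltaRes_two_faces {R F : Finset (Fin 2 × P)} :
    F ∈ (deltaRes 2 P R).faces ↔ F ⊆ R ∧ ∀ p q, (0, p) ∈ F → (1, q) ∈ F → ¬ p ≤ q := by
  refine and_congr_right fun _ => ⟨fun h p q hp hq hpq => h ⟨![p, q], ?_, ?_⟩,
    fun h ⟨c, hc, hcF⟩ => h _ _ (hcF 0) (hcF 1) (hc (Fin.zero_le 1))⟩
  · intro i j hij
    fin_cases i <;> fin_cases j <;> simp_all
  · intro i
    fin_cases i <;> simpa

lemma insert_zero_mem_deltaRes_faces {R F : Finset (Fin 2 × P)} {p : P}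
    (hF : F ∈ (deltaRes 2 P R).faces) (hpR : (0, p) ∈ R) (hp : ∀ q, (1, q) ∈ F → ¬ p ≤ q) :
    insert (0, p) F ∈ (deltaRes 2 P R).faces := by
  rw [mem_deltaRes_two_faces] at hF ⊢
  refine ⟨Finset.insert_subset hpR hF.1, fun p' q hp' hq => ?_⟩
  have hqF : (1, q) ∈ F := (Finset.mem_insert.1 hq).resolve_left (by simp)
  rcases Finset.mem_insert.1 hp' with h | h
  · obtain rfl : p' = p := (Prod.ext_iff.1 h).2
    exact hp q hqF
  · exact hF.2 p' q h hqF

lemma insert_one_mem_deltaRes_faces {R F : Finset (Fin 2 × P)} {q : P}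
    (hF : F ∈ (deltaRes 2 P R).faces) (hqR : (1, q) ∈ R) (hq : ∀ p, (0, p) ∈ F → ¬ p ≤ q) :
    insert (1, q) F ∈ (deltaRes 2 P R).faces := by
  rw [mem_deltaRes_two_faces] at hF ⊢
  refine ⟨Finset.insert_subset hqR hF.1, fun p q' hp hq' => ?_⟩
  have hpF : (0, p) ∈ F := (Finset.mem_insert.1 hp).resolve_left (by simp)
  rcases Finset.mem_insert.1 hq' with h | h
  · obtain rfl : q' = q := (Prod.ext_iff.1 h).2
    exact hq p hpF
  · exact hF.2 p q' hpF h

lemma collapsesToCone_of_forall_minSet {R : Finset (Fin 2 × P)} {a : P} (ha : a ∈ part R 0)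
    (hmin : ∀ b ∈ minSet (part R 1), ¬ a ≤ b) :
    (deltaRes 2 P R).CollapsesToCone R (0, a) (R.filter fun v => v.1 = 1 ∧ a ≤ v.2) where
  apex_mem := mem_part.1 ha
  apex_notMem h := by simp at h
  subset := Finset.filter_subset _ R
  dominated := by
    rintro ⟨i, b⟩ hd
    obtain ⟨hbR, rfl, -⟩ := Finset.mem_filter.1 hd
    obtain ⟨b', hb'b, hb'⟩ := Finset.exists_le_minimal _ (mem_part.2 hbR)
    have hb'min : b' ∈ minSet (part R 1) :=
      Finset.mem_filter.2 ⟨hb'.1, fun c hc hcb => hb'.eq_of_ge hc hcb⟩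
    refine ⟨(1, b'), mem_part.1 hb'.1, fun h => hmin b' hb'min (Finset.mem_filter.1 h).2.2,
      fun F hF hbF => insert_one_mem_deltaRes_faces hF (mem_part.1 hb'.1) fun p hp hpb => ?_⟩
    exact (mem_deltaRes_two_faces.1 hF).2 p b hp hbF (hpb.trans hb'b)
  cone F hF hDF := insert_zero_mem_deltaRes_faces hF (mem_part.1 ha) fun q hq haq =>
    hDF (1, q) (Finset.mem_filter.2 ⟨(mem_deltaRes_two_faces.1 hF).1 hq, rfl, haq⟩) hq

lemma collapsesToCone_of_forall_maxSet {R : Finset (Fin 2 × P)} {b : P} (hb : b ∈ part R 1)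
    (hmax : ∀ a ∈ maxSet (part R 0), ¬ a ≤ b) :
    (deltaRes 2 P R).CollapsesToCone R (1, b) (R.filter fun v => v.1 = 0 ∧ v.2 ≤ b) where
  apex_mem := mem_part.1 hb
  apex_notMem h := by simp at h
  subset := Finset.filter_subset _ R
  dominated := by
    rintro ⟨i, a⟩ hd
    obtain ⟨haR, rfl, -⟩ := Finset.mem_filter.1 hd
    obtain ⟨a', haa', ha'⟩ := Finset.exists_le_maximal _ (mem_part.2 haR)
    have ha'max : a' ∈ maxSet (part R 0) :=
      Finset.mem_filter.2 ⟨ha'.1, fun c hc hac => ha'.eq_of_le hc hac⟩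
    refine ⟨(0, a'), mem_part.1 ha'.1, fun h => hmax a' ha'max (Finset.mem_filter.1 h).2.2,
      fun F hF haF => insert_zero_mem_deltaRes_faces hF (mem_part.1 ha'.1) fun q hq haq => ?_⟩
    exact (mem_deltaRes_two_faces.1 hF).2 a q haF hq (haa'.trans haq)
  cone F hF hDF := insert_one_mem_deltaRes_faces hF (mem_part.1 hb) fun p hp hpb =>
    hDF (0, p) (Finset.mem_filter.2 ⟨(mem_deltaRes_two_faces.1 hF).1 hp, rfl, hpb⟩) hp

lemma exists_collapsesToCone_of_not_subsetLE {R : Finset (Fin 2 × P)}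
    (h : ¬ subsetLE (part R 0) (part R 1)) :
    ∃ z D, (deltaRes 2 P R).CollapsesToCone R z D := by
  rw [subsetLE, not_and_or] at h
  push Not at h
  rcases h with ⟨a, ha, hmin⟩ | ⟨b, hb, hmax⟩
  · exact ⟨_, _, collapsesToCone_of_forall_minSet (Finset.mem_filter.1 ha).1 hmin⟩
  · exact ⟨_, _, collapsesToCone_of_forall_maxSet (Finset.mem_filter.1 hb).1 hmax⟩

end Letterplace

/-- If the parts of `R ⊆ [2] × P` do not satisfy `R₁ ≤ R₂`,
then the restriction `Δ(2,P)|_R` is contractible, all of its reduced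
cohomology vanishes, and consequently `β_{i,R}(L(2,P)) = 0` for all `i`. -/
theorem statement_9 {P : Type u} [PartialOrder P] [Fintype P] (k : Type w)
    [Field k] (R : Finset (Fin 2 × P))
    (h : ¬ subsetLE (part R 0) (part R 1)) :
    ContractibleSpace (SComplex.realization (deltaRes 2 P R)) ∧
    (∀ i : ℤ, SComplex.redCohomDim k (deltaRes 2 P R) i = 0) ∧
    ∀ i : ℤ, multiBetti k (letterplace 2 P) i R = 0 := by
  obtain ⟨z, D, hcollapse⟩ := exists_collapsesToCone_of_not_subsetLE h
  have hempty : ∅ ∈ (deltaRes 2 P R).faces := mem_deltaRes_two_faces.2 ⟨R.empty_subset, by simp⟩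
  exact ⟨hcollapse.contractibleSpace hempty, hcollapse.redCohomDim_eq_zero k,
    hcollapse.multiBetti_eq_zero (I := letterplace 2 P) k⟩

end
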